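/- If a class P of Boolean-valued functions has finite VC dimension d ≥ 1, then its growth function Π_P(m) is O(m^d); specifically Π_P(m) ≤ (e·m/d)^d for all m ≥ d. -/

import Mathlib

/-- The realizable dichotomies of a finite set `S` by a class `P` of Boolean-valued functions. -/
def dichotomies {X : Type*} (P : Set (X → Bool)) (S : Finset X) : Set (↥S → Bool) :=
  {f | ∃ p ∈ P, ∀ x : ↥S, p x = f x}

/-- `P` shatters a finite set `S`: every dichotomy of `S` is realized by some member of `P`. -/
def Shatters {X : Type*} (P : Set (X → Bool)) (S : Finset X) : Prop :=
  ∀ f : X → Bool, ∃ p ∈ P, ∀ x ∈ S, p x = f x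

/-- The growth function: maximum number of realizable dichotomies over `m`-element sets. -/
noncomputable def growth {X : Type*} (P : Set (X → Bool)) (m : ℕ) : ℕ :=
  sSup {n | ∃ S : Finset X, S.card = m ∧ Nat.card (dichotomies P S) = n}

/-!
Record each dichotomy of `S` as the subset of `S` where it is `true`. A set shattered by this
family is shattered by `P`, so the family has VC dimension at most `d`, and the Sauer–Shelah
lemma bounds its size by `∑_{k ≤ d} (m choose k)`. For `d ≤ m` and `x = d / m ≤ 1`,
`(∑_{k ≤ d} (m choose k)) x^d ≤ ∑_k (m choose k) x^k = (1 + x)^m ≤ e^(x m) = e^d`,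
which is `(e m / d)^d` after dividing by `x^d`.
-/

open Finset hiding Shatters

section BinomialSum

theorem sum_choose_mul_pow_le_one_add_pow (m d : ℕ) {x : ℝ} (hx₀ : 0 ≤ x) (hx₁ : x ≤ 1) :
    (∑ k ∈ Iic d, (m.choose k : ℝ)) * x ^ d ≤ (1 + x) ^ m := by
  calc (∑ k ∈ Iic d, (m.choose k : ℝ)) * x ^ d
      ≤ ∑ k ∈ Iic d, (m.choose k : ℝ) * x ^ k := by
        rw [sum_mul]
        exact sum_le_sum fun k hk =>
          mul_le_mul_of_nonneg_left (pow_le_pow_of_le_one hx₀ hx₁ (mem_Iic.mp hk)) (by positivity)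
    _ ≤ ∑ k ∈ Iic d ∪ range (m + 1), (m.choose k : ℝ) * x ^ k :=
        sum_le_sum_of_subset_of_nonneg subset_union_left fun _ _ _ => by positivity
    _ = ∑ k ∈ range (m + 1), (m.choose k : ℝ) * x ^ k := by
        refine (sum_subset subset_union_right fun k _ hk => ?_).symm
        rw [Nat.choose_eq_zero_of_lt (by simpa using hk), Nat.cast_zero, zero_mul]
    _ = (1 + x) ^ m := by
        rw [add_comm 1 x, add_pow]
        exact sum_congr rfl fun k _ => by ring

theorem sum_choose_le_exp_mul_div_pow {m d : ℕ} (hdm : d ≤ m) :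
    ∑ k ∈ Iic d, (m.choose k : ℝ) ≤ (Real.exp 1 * m / d) ^ d := by
  rcases Nat.eq_zero_or_pos d with rfl | hd
  · simp [← Nat.range_succ_eq_Iic]
  have hm : (0 : ℝ) < m := by exact_mod_cast hd.trans_le hdm
  set x : ℝ := d / m with hx
  have hx₀ : 0 < x := by positivity
  have hx₁ : x ≤ 1 := div_le_one_of_le₀ (by exact_mod_cast hdm) hm.le
  have key : (∑ k ∈ Iic d, (m.choose k : ℝ)) * x ^ d ≤ Real.exp 1 ^ d :=
    calc (∑ k ∈ Iic d, (m.choose k : ℝ)) * x ^ d ≤ (1 + x) ^ m :=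
          sum_choose_mul_pow_le_one_add_pow m d hx₀.le hx₁
      _ ≤ Real.exp x ^ m := by gcongr; linarith [Real.add_one_le_exp x]
      _ = Real.exp 1 ^ d := by
          rw [← Real.exp_nat_mul, ← Real.exp_nat_mul, mul_one, hx, mul_div_cancel₀ _ hm.ne']
  calc ∑ k ∈ Iic d, (m.choose k : ℝ) ≤ Real.exp 1 ^ d / x ^ d :=
        (le_div_iff₀ (by positivity)).mpr key
    _ = (Real.exp 1 * m / d) ^ d := by
        rw [← div_pow, hx]; field_simp

end BinomialSum

section Traces

def trueSetEmbedding (α : Type*) [Fintype α] : (α → Bool) ↪ Finset α where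
  toFun g := univ.filter (g · = true)
  inj' g g' h := funext fun y => Bool.eq_iff_iff.mpr (by simpa using congrArg (y ∈ ·) h)

variable {X : Type*} (P : Set (X → Bool)) (S : Finset X)

noncomputable def traceFamily : Finset (Finset S) :=
  (Set.toFinite (dichotomies P S)).toFinset.map (trueSetEmbedding S)

theorem card_traceFamily : #(traceFamily P S) = Nat.card (dichotomies P S) := by
  rw [traceFamily, card_map, Nat.card_eq_card_finite_toFinset]

variable {P S}

theorem mem_traceFamily {u : Finset S} :
    u ∈ traceFamily P S ↔ ∃ p ∈ P, ∀ y : S, p y = true ↔ y ∈ u := by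
  simp only [traceFamily, mem_map, Set.Finite.mem_toFinset, dichotomies, Set.mem_ofPred_eq,
    trueSetEmbedding]
  constructor
  · rintro ⟨g, ⟨p, hp, hpg⟩, rfl⟩
    exact ⟨p, hp, fun y => by simp [hpg]⟩
  · rintro ⟨p, hp, hpu⟩
    exact ⟨fun y => p y, ⟨p, hp, fun _ => rfl⟩, by ext y; simp [hpu]⟩

theorem shatters_map_subtype_of_shatters_traceFamily [DecidableEq X] {t : Finset S}
    (ht : (traceFamily P S).Shatters t) :
    Shatters P (t.map (Function.Embedding.subtype _)) := by
  intro f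
  obtain ⟨u, hu, htu⟩ := ht (filter_subset (fun y : S => f y = true) t)
  obtain ⟨p, hp, hpu⟩ := mem_traceFamily.mp hu
  refine ⟨p, hp, ?_⟩
  simp only [mem_map, Function.Embedding.coe_subtype]
  rintro _ ⟨y, hy, rfl⟩
  have hyu : y ∈ t ∩ u ↔ f y = true := by rw [htu]; simp [hy]
  rw [mem_inter, ← hpu] at hyu
  exact Bool.eq_iff_iff.mpr (by simpa [hy] using hyu)

variable {d : ℕ} (hVC : ∀ T : Finset X, T.card = d + 1 → ¬ Shatters P T)
include hVC

theorem vcDim_traceFamily_le [DecidableEq X] : (traceFamily P S).vcDim ≤ d := by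
  refine Finset.sup_le fun s hs => ?_
  by_contra! hds
  obtain ⟨t, hts, htd⟩ := exists_subset_card_eq hds
  exact hVC _ (by simpa using htd)
    (shatters_map_subtype_of_shatters_traceFamily ((mem_shatterer.mp hs).mono_right hts))

theorem card_dichotomies_le_sum_choose :
    Nat.card (dichotomies P S) ≤ ∑ k ∈ Iic d, S.card.choose k := by
  classical
  calc Nat.card (dichotomies P S) = #(traceFamily P S) := (card_traceFamily P S).symm
    _ ≤ #(traceFamily P S).shatterer := card_le_card_shatterer _
    _ ≤ ∑ k ∈ Iic (traceFamily P S).vcDim, (Fintype.card S).choose k :=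
        card_shatterer_le_sum_vcDim
    _ ≤ ∑ k ∈ Iic d, S.card.choose k := by
        rw [Fintype.card_coe]
        exact sum_le_sum_of_subset (Iic_subset_Iic.mpr (vcDim_traceFamily_le hVC))

theorem growth_le_sum_choose (m : ℕ) : growth P m ≤ ∑ k ∈ Iic d, m.choose k :=
  csSup_le' <| by
    rintro _ ⟨S, rfl, rfl⟩
    exact card_dichotomies_le_sum_choose hVC

end Traces

theorem stmt_6_general {X : Type*} (P : Set (X → Bool)) (d : ℕ)
    (hVC : ∀ S : Finset X, S.card = d + 1 → ¬ Shatters P S) :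
    ∀ m : ℕ, d ≤ m → (growth P m : ℝ) ≤ (Real.exp 1 * m / d) ^ d := fun m hdm =>
  calc (growth P m : ℝ) ≤ ∑ k ∈ Iic d, (m.choose k : ℝ) := by
        exact_mod_cast growth_le_sum_choose hVC m
    _ ≤ (Real.exp 1 * m / d) ^ d := sum_choose_le_exp_mul_div_pow hdm

theorem stmt_6 {X : Type*} (P : Set (X → Bool)) (d : ℕ) (hd : 1 ≤ d)
    (hVC : ∀ S : Finset X, S.card = d + 1 → ¬ Shatters P S) :
    ∀ m : ℕ, d ≤ m → (growth P m : ℝ) ≤ (Real.exp 1 * m / d) ^ d :=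
  stmt_6_general P d hVC
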